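/- Every finite binary matroid of rank at most 2 is regular; that is, if a finite matroid of rank ≤ 2 admits a representation over F₂, then it admits a representation over every field. -/

import Mathlib

/-- `ρ` is a representation of the matroid `M` over the field `K`. -/
def Matroid.IsRep {α : Type*} (M : Matroid α) (K : Type*) [Field K] {V : Type*}
    [AddCommGroup V] [Module K V] (ρ : α → V) : Prop :=
  (∀ S ⊆ M.E, (M.Indep S ↔ Set.InjOn ρ S ∧ LinearIndependent K ((↑) : (ρ '' S) → V))) ∧
    Submodule.span K (ρ '' M.E) = ⊤

/-- `M` is representable over the field `K`. -/
def Matroid.RepresentableOver {α : Type*} (M : Matroid α) (K : Type) [Field K] : Prop :=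
  ∃ (V : Type) (_ : AddCommGroup V) (_ : Module K V) (ρ : α → V), M.IsRep K ρ

/-- A matroid is binary if it admits a representation over `𝔽₂ = ZMod 2`. -/
def Matroid.IsBinary {α : Type*} (M : Matroid α) : Prop :=
  M.RepresentableOver (ZMod 2)

/-- A matroid is regular if it admits a representation over every field. -/
def Matroid.IsRegular {α : Type*} (M : Matroid α) : Prop :=
  ∀ (K : Type) [Field K], M.RepresentableOver K

/-!
In dimension at most two a finite family is linearly independent iff it has at most two members,
none zero and no two parallel. Over `𝔽₂` "parallel" just means "equal". Write the binary
representation in coordinates `𝔽₂ⁿ` with `n ≤ 2` and read every coordinate `0`/`1` in an arbitrary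
field `K`: nonzero vectors stay nonzero and distinct ones become non-parallel, so the criterion,
and with it the matroid, is preserved.
-/

open Set Submodule Module

theorem linearIndepOn_iff_of_finrank_le_two {K V ι : Type*} [DivisionRing K] [AddCommGroup V]
    [Module K V] [FiniteDimensional K V] (hV : finrank K V ≤ 2) {v : ι → V} {s : Set ι}
    (hs : s.Finite) :
    LinearIndepOn K v s ↔
      s.ncard ≤ 2 ∧ (∀ i ∈ s, v i ≠ 0) ∧ s.Pairwise fun i j ↦ ∀ c : K, c • v i ≠ v j := by
  refine ⟨fun h ↦ ⟨?_, fun i hi ↦ h.ne_zero hi, fun i hi j hj hij ↦ ?_⟩, ?_⟩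
  · have := hs.fintype
    rw [← Nat.card_coe_set_eq, Nat.card_eq_fintype_card]
    exact h.fintype_card_le_finrank.trans hV
  · exact (linearIndepOn_pair_iff v hij (h.ne_zero hi)).1 (h.mono (pair_subset hi hj))
  · rintro ⟨hcard, hne, hpar⟩
    interval_cases hc : s.ncard
    · rw [(ncard_eq_zero hs).1 hc]
      exact linearIndepOn_empty K v
    · obtain ⟨i, rfl⟩ := ncard_eq_one.1 hc
      exact .singleton (hne i rfl)
    · obtain ⟨i, j, hij, rfl⟩ := ncard_eq_two.1 hc
      exact (linearIndepOn_pair_iff v hij (hne i (by simp))).2 (hpar (by simp) (by simp) hij)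

theorem ZMod.eq_zero_or_eq_one_two (a : ZMod 2) : a = 0 ∨ a = 1 := by
  decide +revert

theorem ZMod.forall_two_smul_ne_iff {V : Type*} [AddCommGroup V] [Module (ZMod 2) V] {u v : V}
    (hv : v ≠ 0) : (∀ c : ZMod 2, c • u ≠ v) ↔ u ≠ v := by
  refine ⟨fun h ↦ by simpa using h 1, fun huv c ↦ ?_⟩
  obtain rfl | rfl := c.eq_zero_or_eq_one_two
  · simpa using hv.symm
  · simpa using huv

@[simp]
theorem ZMod.cast_one_two {R : Type*} [AddGroupWithOne R] : (cast (1 : ZMod 2) : R) = 1 :=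
  Nat.cast_one

section CastTwo

variable {K : Type*} [Ring K] [Nontrivial K]

theorem ZMod.cast_two_injective : Function.Injective (ZMod.cast : ZMod 2 → K) := by
  intro a b
  obtain rfl | rfl := a.eq_zero_or_eq_one_two <;>
    obtain rfl | rfl := b.eq_zero_or_eq_one_two <;> simp

theorem ZMod.forall_smul_cast_two_ne_iff {ι : Type*} {u v : ι → ZMod 2} (hv : v ≠ 0) :
    (∀ c : K, c • (fun i ↦ ((u i).cast : K)) ≠ fun i ↦ (v i).cast) ↔ u ≠ v := by
  refine ⟨fun h huv ↦ by simpa [huv] using h 1, fun huv c hc ↦ huv ?_⟩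
  obtain ⟨i, hi⟩ := Function.ne_iff.1 hv
  have hvi : v i = 1 := (v i).eq_zero_or_eq_one_two.resolve_left hi
  have hc1 : c * (u i).cast = 1 := by simpa [hvi] using congrFun hc i
  obtain hui | hui := (u i).eq_zero_or_eq_one_two
  · simp [hui] at hc1
  obtain rfl : c = 1 := by simpa [hui] using hc1
  funext j
  exact ZMod.cast_two_injective (by simpa using congrFun hc j)

theorem ZMod.cast_two_comp_eq_zero_iff {ι : Type*} {u : ι → ZMod 2} :
    (fun i ↦ ((u i).cast : K)) = 0 ↔ u = 0 := by
  simp only [funext_iff, Pi.zero_apply]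
  exact forall_congr' fun i ↦ ZMod.cast_two_injective.eq_iff' ZMod.cast_zero

end CastTwo

theorem linearIndepOn_cast_two_iff {K ι : Type*} [DivisionRing K] {n : ℕ} (hn : n ≤ 2) {w : ι → Fin n → ZMod 2}
    {s : Set ι} (hs : s.Finite) :
    LinearIndepOn K (fun x i ↦ ((w x i).cast : K)) s ↔ LinearIndepOn (ZMod 2) w s := by
  have hsmul {x y : ι} (hy : w y ≠ 0) :
      (∀ c : K, c • (fun i ↦ ((w x i).cast : K)) ≠ fun i ↦ (w y i).cast) ↔
        ∀ c : ZMod 2, c • w x ≠ w y :=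
    (ZMod.forall_smul_cast_two_ne_iff hy).trans (ZMod.forall_two_smul_ne_iff hy).symm
  rw [linearIndepOn_iff_of_finrank_le_two (by simpa) hs,
    linearIndepOn_iff_of_finrank_le_two (by simpa) hs]
  simp only [ne_eq, ZMod.cast_two_comp_eq_zero_iff]
  refine and_congr_right' (and_congr_right fun h0 ↦ ?_)
  exact forall₂_congr fun x _ ↦ forall₂_congr fun y hy ↦ imp_congr_right fun _ ↦ hsmul (h0 y hy)

namespace Matroid

section IsRep

variable {α : Type*} {M : Matroid α} {K : Type*} [Field K] {V : Type*} [AddCommGroup V]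
  [Module K V] {ρ : α → V}

theorem isRep_iff :
    M.IsRep K ρ ↔ (∀ S ⊆ M.E, M.Indep S ↔ LinearIndepOn K ρ S) ∧ span K (ρ '' M.E) = ⊤ := by
  refine and_congr_left' (forall₂_congr fun S _ ↦ ?_)
  rw [LinearIndepOn_iff_linearIndepOn_image_injOn, and_comm]
  rfl

theorem IsRep.indep_iff (hρ : M.IsRep K ρ) {S : Set α} (hS : S ⊆ M.E) :
    M.Indep S ↔ LinearIndepOn K ρ S :=
  (isRep_iff.1 hρ).1 S hS

theorem IsRep.span_image_isBase (hρ : M.IsRep K ρ) {B : Set α} (hB : M.IsBase B) :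
    span K (ρ '' B) = ⊤ := by
  rw [eq_top_iff, ← hρ.2, span_le]
  rintro _ ⟨e, he, rfl⟩
  by_contra hns
  obtain ⟨hins, heB⟩ := ((hρ.indep_iff hB.subset_ground).1 hB.indep).notMem_span_iff.1 hns
  exact (hB.insert_dep ⟨he, heB⟩).not_indep
    ((hρ.indep_iff (insert_subset he hB.subset_ground)).2 hins)

theorem IsRep.finiteDimensional (hρ : M.IsRep K ρ) {B : Set α} (hB : M.IsBase B)
    (hBfin : B.Finite) : FiniteDimensional K V :=
  ⟨fg_def.2 ⟨_, hBfin.image ρ, hρ.span_image_isBase hB⟩⟩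

theorem IsRep.finrank_le_ncard (hρ : M.IsRep K ρ) {B : Set α} (hB : M.IsBase B)
    (hBfin : B.Finite) : finrank K V ≤ B.ncard := by
  have := hBfin.fintype
  rw [← Nat.card_coe_set_eq, Nat.card_eq_fintype_card]
  refine finrank_le_of_span_eq_top (v := fun x : B ↦ ρ x) ?_
  rw [← image_eq_range, hρ.span_image_isBase hB]

end IsRep

theorem representableOver_of_forall_indep_iff {α : Type*} {M : Matroid α} {K : Type} [Field K]
    {W : Type} [AddCommGroup W] [Module K W] (ρ : α → W) (h : ∀ S ⊆ M.E, M.Indep S ↔ LinearIndepOn K ρ S) :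
    M.RepresentableOver K := by
  classical
  let P := span K (ρ '' M.E)
  -- values off the ground set do not affect independence, but they could leave `P`
  let ρ' : α → P := fun x ↦ if hx : x ∈ M.E then ⟨ρ x, subset_span (mem_image_of_mem ρ hx)⟩ else 0
  have hρ' : EqOn (P.subtype ∘ ρ') ρ M.E := fun x hx ↦ by simp [ρ', hx]
  refine ⟨P, _, _, ρ', isRep_iff.2 ⟨fun S hS ↦ ?_, ?_⟩⟩
  · rw [h S hS, ← linearIndepOn_congr (hρ'.mono hS),
      P.subtype.linearIndepOn_iff_of_injOn P.injective_subtype.injOn]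
  · apply map_injective_of_injective P.injective_subtype
    rw [map_span, Submodule.map_top, range_subtype, ← image_comp, hρ'.image_eq]

end Matroid

/-- Every finite binary matroid of rank at most 2 is regular. -/
theorem binary_rank_le_two_regular {α : Type*} (M : Matroid α) [M.Finite]
    (hrank : ∃ B, M.IsBase B ∧ B.ncard ≤ 2) (hbin : M.IsBinary) :
    M.IsRegular := by
  obtain ⟨B, hB, hB2⟩ := hrank
  obtain ⟨V, _, _, ρ, hρ⟩ := hbin
  intro K _
  have hBfin := hB.finite
  have := hρ.finiteDimensional hB hBfin
  let e := (finBasis (ZMod 2) V).equivFun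
  refine M.representableOver_of_forall_indep_iff (K := K) (fun x i ↦ ((e (ρ x) i).cast : K))
    fun S hS ↦ ?_
  rw [hρ.indep_iff hS, linearIndepOn_cast_two_iff ((hρ.finrank_le_ncard hB hBfin).trans hB2)
    (M.ground_finite.subset hS), ← e.toLinearMap.linearIndepOn_iff_of_injOn e.injective.injOn]
  rfl
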